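/- The two symmetric bilinear forms over ℤ given by the matrices [[-2n - m n², 1], [1, -1]] and [[-2n - m n², -1 - m n], [-1 - m n, -1 - m]] are not isomorphic as integral bilinear forms (i.e., there is no matrix P ∈ GL₂(ℤ) with Pᵀ A P = B), for all integers m ≥ 1 and n ≥ 2. -/
import Mathlib


open Matrix

/-- The intersection forms of `W_{m,n}^1` and `W_{m,n}^2` are not isomorphic as
integral symmetric bilinear forms: there is no `P ∈ GL₂(ℤ)` with `Pᵀ A P = B`. -/
theorem intersection_forms_not_isomorphic (m n : ℤ) (hm : 1 ≤ m) (hn : 2 ≤ n) :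
    ¬ ∃ P : Matrix (Fin 2) (Fin 2) ℤ, IsUnit P.det ∧
      P.transpose * !![-2*n - m*n^2, 1; 1, -1] * P =
        !![-2*n - m*n^2, -1 - m*n; -1 - m*n, -1 - m] := by
  rintro ⟨P, hP, hPAP⟩
  have h1 : P * P⁻¹ = 1 := Matrix.mul_nonsing_inv P hP
  have h2 : P⁻¹ᵀ * Pᵀ = 1 := by rw [← Matrix.transpose_mul, h1, Matrix.transpose_one]
  have hA : P⁻¹ᵀ * !![-2*n - m*n^2, -1 - m*n; -1 - m*n, -1 - m] * P⁻¹ =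
      !![-2*n - m*n^2, 1; 1, -1] := by
    rw [← hPAP]
    calc P⁻¹ᵀ * (Pᵀ * !![-2*n - m*n^2, 1; 1, -1] * P) * P⁻¹
        = (P⁻¹ᵀ * Pᵀ) * !![-2*n - m*n^2, 1; 1, -1] * (P * P⁻¹) := by
          noncomm_ring
      _ = !![-2*n - m*n^2, 1; 1, -1] := by rw [h1, h2, Matrix.one_mul, Matrix.mul_one]
  have key := congrFun (congrFun hA 1) 1
  simp [Matrix.mul_apply, Fin.sum_univ_two, Matrix.transpose_apply] at key
  generalize hxg : P⁻¹ 0 1 = x at key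
  generalize hyg : P⁻¹ 1 1 = y at key
  rcases eq_or_ne x 0 with h0 | h0
  · subst h0
    rcases eq_or_ne y 0 with h0' | h0'
    · subst h0'; nlinarith [key]
    · have hy2 : 0 < y^2 := by positivity
      have hy2' : 1 ≤ y^2 := by linarith
      nlinarith [key, hy2']
  · have hx2 : 0 < x^2 := by positivity
    have hx2' : 1 ≤ x^2 := by linarith
    have hn2 : (4:ℤ) ≤ n^2 := by nlinarith
    have hmn : m*4 ≤ m*n^2 := by
      have := mul_nonneg (by linarith : (0:ℤ) ≤ m) (by linarith : (0:ℤ) ≤ n^2 - 4)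
      nlinarith
    have hgap : 1 + m < 2*n + m*n^2 - 1 := by linarith
    have hquad : (0:ℤ) ≤ (2*n + m*n^2 - 1) * (x^2 - 1) :=
      mul_nonneg (by nlinarith) (by linarith)
    nlinarith [key, sq_nonneg ((1+m)*y + (1+m*n)*x), hquad, hgap, hm]
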